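/- If λ₁ = inf_{u ∈ Σ} Φ(u) is an eigenvalue of L_β, then it is simple: any two eigenfunctions u, v associated with λ₁ are proportional, i.e. there exists χ ∈ ℝ with v = χ u almost everywhere in ℝ^N. -/

import Mathlib

open MeasureTheory Filter Topology

noncomputable section

/-- Euclidean space `ℝ^N`. -/
abbrev Vec (N : ℕ) := EuclideanSpace ℝ (Fin N)

/-- The (squared) Gagliardo seminorm
`[u]² = ∫∫ |u(x)-u(y)|² / |x-y|^(N+2s) dx dy`. -/
def gagliardo (N : ℕ) (s : ℝ) (u : Vec N → ℝ) : ℝ :=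
  ∫ p : Vec N × Vec N, (u p.1 - u p.2) ^ 2 / ‖p.1 - p.2‖ ^ ((N : ℝ) + 2 * s)

/-- `u ∈ H^s(ℝ^N)`: `u ∈ L²` and the Gagliardo integrand is integrable. -/
def memHs (N : ℕ) (s : ℝ) (u : Vec N → ℝ) : Prop :=
  MemLp u 2 (volume : Measure (Vec N)) ∧
    Integrable (fun p : Vec N × Vec N =>
      (u p.1 - u p.2) ^ 2 / ‖p.1 - p.2‖ ^ ((N : ℝ) + 2 * s)) volume

/-- The functional `Φ(u) = [u]² + β ∫ g u²`. -/
def Phi (N : ℕ) (s β : ℝ) (g : Vec N → ℝ) (u : Vec N → ℝ) : ℝ :=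
  gagliardo N s u + β * ∫ x : Vec N, g x * u x ^ 2

/-- Assumption (g₁): `g` is bounded measurable with `0 ≤ g ≤ 1`, `g → 1` at infinity,
and `{g < 1}` has positive measure. -/
def g1cond (N : ℕ) (g : Vec N → ℝ) : Prop :=
  Measurable g ∧ (∀ x, 0 ≤ g x ∧ g x ≤ 1) ∧
    Tendsto g (cocompact (Vec N)) (𝓝 1) ∧
    0 < volume {x : Vec N | g x < 1}

/-- The constraint set `Σ = {u ∈ H^s : ∫ u² = 1}`. -/
def SigmaSet (N : ℕ) (s : ℝ) : Set (Vec N → ℝ) :=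
  {u | memHs N s u ∧ ∫ x : Vec N, u x ^ 2 = 1}

/-- Distance induced by the `H^s` norm `‖u‖² = [u]² + β ‖u‖₂²`. -/
def hsDist (N : ℕ) (s β : ℝ) (u v : Vec N → ℝ) : ℝ :=
  Real.sqrt (gagliardo N s (u - v) + β * ∫ x : Vec N, (u x - v x) ^ 2)

/-- Sequential compactness of a set with respect to the `H^s` distance. -/
def IsHsCompact (N : ℕ) (s β : ℝ) (A : Set (Vec N → ℝ)) : Prop :=
  ∀ f : ℕ → Vec N → ℝ, (∀ n, f n ∈ A) →
    ∃ u ∈ A, ∃ φ : ℕ → ℕ, StrictMono φ ∧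
      Tendsto (fun n => hsDist N s β (f (φ n)) u) atTop (𝓝 0)

/-- Continuity on a set `A ⊆ H^s` of a map into `ℝ^m`, with respect to the `H^s` distance. -/
def HsContOn (N : ℕ) (s β : ℝ) {m : ℕ} (A : Set (Vec N → ℝ))
    (h : (Vec N → ℝ) → EuclideanSpace ℝ (Fin m)) : Prop :=
  ∀ u ∈ A, ∀ ε > 0, ∃ δ > 0, ∀ v ∈ A, hsDist N s β u v < δ → dist (h v) (h u) < ε

/-- The Krasnoselskii genus of `A` is at least `k`: for every `m < k` there is no
continuous odd map `A → ℝ^m \ {0}`. -/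
def genusGE (N : ℕ) (s β : ℝ) (A : Set (Vec N → ℝ)) (k : ℕ) : Prop :=
  ∀ m : ℕ, m < k →
    ¬ ∃ h : (Vec N → ℝ) → EuclideanSpace ℝ (Fin m),
      HsContOn N s β A h ∧ (∀ u ∈ A, h (-u) = -h u) ∧ ∀ u ∈ A, h u ≠ 0

/-- The class `Σ_k` of compact symmetric subsets of `Σ` with genus at least `k`. -/
def SigmaK (N : ℕ) (s β : ℝ) (k : ℕ) : Set (Set (Vec N → ℝ)) :=
  {A | A ⊆ SigmaSet N s ∧ IsHsCompact N s β A ∧ (∀ u ∈ A, -u ∈ A) ∧ genusGE N s β A k}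

/-- The minimax levels `λ_k = inf_{A ∈ Σ_k} sup_{u ∈ A} Φ(u)`. -/
def lambdaK (N : ℕ) (s β : ℝ) (g : Vec N → ℝ) (k : ℕ) : ℝ :=
  sInf {c | ∃ A ∈ SigmaK N s β k, c = sSup (Phi N s β g '' A)}

/-- `(lam, u)` is an eigenpair of `L_β = (-Δ)^s + β g`: `u ∈ H^s`, `u ≠ 0`, and the weak
eigenvalue equation holds against every test function `φ ∈ H^s`. -/
def IsEigenpair (N : ℕ) (s β : ℝ) (g : Vec N → ℝ) (lam : ℝ) (u : Vec N → ℝ) : Prop :=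
  memHs N s u ∧ ¬ u =ᵐ[(volume : Measure (Vec N))] 0 ∧
    ∀ φ : Vec N → ℝ, memHs N s φ →
      (∫ p : Vec N × Vec N,
          (u p.1 - u p.2) * (φ p.1 - φ p.2) / ‖p.1 - p.2‖ ^ ((N : ℝ) + 2 * s)) +
        β * ∫ x : Vec N, g x * u x * φ x = lam * ∫ x : Vec N, u x * φ x

/-- The first eigenvalue `λ₁ = inf_{u ∈ Σ} Φ(u)`. -/
def lambda1 (N : ℕ) (s β : ℝ) (g : Vec N → ℝ) : ℝ :=
  sInf (Phi N s β g '' SigmaSet N s)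

/-
An eigenfunction `w` of `λ₁` attains the infimum of the Rayleigh quotient `Φ(w) / ∫ w²`, and so
does `|w|`, because the `g`-term is unchanged and `(|a| - |b|)² ≤ (a - b)²`. Hence the two
Gagliardo seminorms agree, so `w(x) w(y) ≥ 0` for a.e. `(x, y)`: `w` has constant sign.

Given eigenfunctions `u, v`, the function `w = v - χ u` with `χ = ∫ u v / ∫ u²` solves the same
equation and is orthogonal to `u`. If `w ≠ 0`, flip signs so that `u, w ≥ 0`; orthogonality gives
`u w = 0`, and testing the equation of `u` against `w` then leaves
`∫∫ (u(x) w(y) + u(y) w(x)) / |x - y|^(N+2s) = 0`. So `u(x) w(y) = 0` for a.e. `(x, y)`, i.e.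
`{u ≠ 0} × {w ≠ 0}` is null, and `u = 0` or `w = 0`, a contradiction.
-/

section Measure

variable {α β : Type*} [MeasurableSpace α] [MeasurableSpace β] {μ : Measure α} {ν : Measure β}

theorem integral_const_mul_add_const_mul {f g : α → ℝ} (hf : Integrable f μ)
    (hg : Integrable g μ) (a b : ℝ) :
    ∫ x, (a * f x + b * g x) ∂μ = a * ∫ x, f x ∂μ + b * ∫ x, g x ∂μ := by
  rw [integral_add (hf.const_mul a) (hg.const_mul b), integral_const_mul, integral_const_mul]

theorem integral_sq_pos {f : α → ℝ} (hf : MemLp f 2 μ) (h : ¬ f =ᵐ[μ] 0) :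
    0 < ∫ x, f x ^ 2 ∂μ := by
  refine (integral_nonneg fun x => sq_nonneg (f x)).lt_of_ne' fun h0 => h ?_
  filter_upwards [(integral_eq_zero_iff_of_nonneg (fun x => sq_nonneg (f x))
    hf.integrable_sq).mp h0] with x hx
  exact pow_eq_zero_iff two_ne_zero |>.mp hx

theorem exists_ne_zero_ae_nonneg_const_mul {f : α → ℝ} (h : 0 ≤ᵐ[μ] f ∨ f ≤ᵐ[μ] 0) :
    ∃ a : ℝ, a ≠ 0 ∧ ∀ᵐ x ∂μ, 0 ≤ a * f x := by
  rcases h with h | h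
  · exact ⟨1, one_ne_zero, by filter_upwards [h] with x hx; simpa using hx⟩
  · exact ⟨-1, by norm_num, by filter_upwards [h] with x hx; simpa using hx⟩

theorem ae_eq_zero_or_ae_eq_zero_of_ae_mul_eq_zero [SFinite ν] {f : α → ℝ} {g : β → ℝ}
    (h : ∀ᵐ p ∂μ.prod ν, f p.1 * g p.2 = 0) : f =ᵐ[μ] 0 ∨ g =ᵐ[ν] 0 := by
  have hsub : {x | f x ≠ 0} ×ˢ {y | g y ≠ 0} ⊆ {p : α × β | ¬ f p.1 * g p.2 = 0} :=
    fun p hp => mul_ne_zero hp.1 hp.2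
  have hnull := measure_mono_null hsub (ae_iff.mp h)
  rw [Measure.prod_prod, mul_eq_zero] at hnull
  exact hnull.imp ae_iff.mpr ae_iff.mpr

theorem ae_nonneg_or_ae_nonpos_of_ae_mul_nonneg [SFinite μ] {f : α → ℝ}
    (h : ∀ᵐ p ∂μ.prod μ, 0 ≤ f p.1 * f p.2) : 0 ≤ᵐ[μ] f ∨ f ≤ᵐ[μ] 0 := by
  have hsplit : ∀ᵐ p ∂μ.prod μ, min (f p.1) 0 * max (f p.2) 0 = 0 := by
    filter_upwards [h] with p hp
    rcases le_total (f p.1) 0 with h1 | h1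
    · rcases le_total (f p.2) 0 with h2 | h2
      · rw [max_eq_right h2, mul_zero]
      · rw [min_eq_left h1, max_eq_left h2]
        exact le_antisymm (mul_nonpos_of_nonpos_of_nonneg h1 h2) hp
    · rw [min_eq_right h1, zero_mul]
  refine (ae_eq_zero_or_ae_eq_zero_of_ae_mul_eq_zero
    (f := fun x => min (f x) 0) (g := fun x => max (f x) 0) hsplit).imp (fun h => ?_) (fun h => ?_)
  · filter_upwards [h] with x hx
    exact min_eq_right_iff.mp hx
  · filter_upwards [h] with x hx
    exact max_eq_right_iff.mp hx

end Measure

section Gagliardo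

variable {N : ℕ} {s : ℝ} {u v : Vec N → ℝ}

def gagliardoDensity (N : ℕ) (s : ℝ) (u v : Vec N → ℝ) (p : Vec N × Vec N) : ℝ :=
  (u p.1 - u p.2) * (v p.1 - v p.2) / ‖p.1 - p.2‖ ^ ((N : ℝ) + 2 * s)

theorem gagliardoDensity_self (p : Vec N × Vec N) :
    gagliardoDensity N s u u p = (u p.1 - u p.2) ^ 2 / ‖p.1 - p.2‖ ^ ((N : ℝ) + 2 * s) := by
  rw [gagliardoDensity, sq]

theorem gagliardo_eq_integral_gagliardoDensity :
    gagliardo N s u = ∫ p, gagliardoDensity N s u u p := by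
  simp only [gagliardo, gagliardoDensity_self]

theorem memHs_iff_integrable_gagliardoDensity :
    memHs N s u ↔ MemLp u 2 volume ∧ Integrable (gagliardoDensity N s u u) volume := by
  simp only [memHs, ← gagliardoDensity_self]

theorem gagliardoDensity_self_nonneg (p : Vec N × Vec N) : 0 ≤ gagliardoDensity N s u u p := by
  rw [gagliardoDensity_self]
  positivity

theorem gagliardo_nonneg : 0 ≤ gagliardo N s u := by
  rw [gagliardo_eq_integral_gagliardoDensity]
  exact integral_nonneg gagliardoDensity_self_nonneg

theorem aestronglyMeasurable_gagliardoDensity (hu : AEStronglyMeasurable u volume)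
    (hv : AEStronglyMeasurable v volume) :
    AEStronglyMeasurable (gagliardoDensity N s u v) volume :=
  (((hu.comp_fst.sub hu.comp_snd).mul (hv.comp_fst.sub hv.comp_snd)).div₀
    (by fun_prop : Measurable fun p : Vec N × Vec N =>
      ‖p.1 - p.2‖ ^ ((N : ℝ) + 2 * s)).aestronglyMeasurable)

theorem memHs.integrable_gagliardoDensity (hu : memHs N s u) (hv : memHs N s v) :
    Integrable (gagliardoDensity N s u v) volume := by
  rw [memHs_iff_integrable_gagliardoDensity] at hu hv
  refine (hu.2.add hv.2).mono'
    (aestronglyMeasurable_gagliardoDensity hu.1.aestronglyMeasurable hv.1.aestronglyMeasurable)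
    (Eventually.of_forall fun p => ?_)
  have hcs : |(u p.1 - u p.2) * (v p.1 - v p.2)| ≤ (u p.1 - u p.2) ^ 2 + (v p.1 - v p.2) ^ 2 := by
    rw [abs_le]
    constructor <;> nlinarith [sq_nonneg (u p.1 - u p.2 + (v p.1 - v p.2)),
      sq_nonneg (u p.1 - u p.2 - (v p.1 - v p.2))]
  have hK : 0 ≤ ‖p.1 - p.2‖ ^ ((N : ℝ) + 2 * s) := by positivity
  rw [Real.norm_eq_abs, Pi.add_apply, gagliardoDensity, gagliardoDensity_self,
    gagliardoDensity_self, abs_div, abs_of_nonneg hK, ← add_div]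
  exact div_le_div_of_nonneg_right hcs hK

theorem memHs.add (hu : memHs N s u) (hv : memHs N s v) : memHs N s (fun x => u x + v x) := by
  refine memHs_iff_integrable_gagliardoDensity.mpr ⟨hu.1.add hv.1, ?_⟩
  refine (((memHs_iff_integrable_gagliardoDensity.mp hu).2.add
    ((hu.integrable_gagliardoDensity hv).const_mul 2)).add
    (memHs_iff_integrable_gagliardoDensity.mp hv).2).congr (Eventually.of_forall fun p => ?_)
  simp only [Pi.add_apply, gagliardoDensity]
  ring

theorem memHs.const_mul (hu : memHs N s u) (c : ℝ) : memHs N s (fun x => c * u x) := by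
  refine memHs_iff_integrable_gagliardoDensity.mpr ⟨hu.1.const_mul c, ?_⟩
  refine ((memHs_iff_integrable_gagliardoDensity.mp hu).2.const_mul (c ^ 2)).congr
    (Eventually.of_forall fun p => ?_)
  simp only [gagliardoDensity]
  ring

theorem gagliardo_const_mul (c : ℝ) :
    gagliardo N s (fun x => c * u x) = c ^ 2 * gagliardo N s u := by
  rw [gagliardo_eq_integral_gagliardoDensity, gagliardo_eq_integral_gagliardoDensity,
    ← integral_const_mul]
  congr 1 with p
  simp only [gagliardoDensity]
  ring

theorem gagliardoDensity_abs_le (p : Vec N × Vec N) :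
    gagliardoDensity N s (fun x => |u x|) (fun x => |u x|) p ≤ gagliardoDensity N s u u p := by
  rw [gagliardoDensity_self, gagliardoDensity_self]
  gcongr ?_ / _
  exact sq_le_sq.mpr (abs_abs_sub_abs_le_abs_sub _ _)

theorem memHs.abs (hu : memHs N s u) : memHs N s (fun x => |u x|) := by
  rw [memHs_iff_integrable_gagliardoDensity] at hu ⊢
  exact ⟨hu.1.abs, hu.2.mono'
    (aestronglyMeasurable_gagliardoDensity hu.1.abs.aestronglyMeasurable
      hu.1.abs.aestronglyMeasurable)
    (Eventually.of_forall fun p => by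
      rw [Real.norm_of_nonneg (gagliardoDensity_self_nonneg p)]
      exact gagliardoDensity_abs_le p)⟩

theorem gagliardo_abs_le (hu : memHs N s u) : gagliardo N s (fun x => |u x|) ≤ gagliardo N s u := by
  rw [gagliardo_eq_integral_gagliardoDensity, gagliardo_eq_integral_gagliardoDensity]
  exact integral_mono (memHs_iff_integrable_gagliardoDensity.mp hu.abs).2
    (memHs_iff_integrable_gagliardoDensity.mp hu).2 gagliardoDensity_abs_le

theorem ae_mul_nonneg_of_gagliardo_abs_eq (hu : memHs N s u)
    (h : gagliardo N s (fun x => |u x|) = gagliardo N s u) :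
    ∀ᵐ p : Vec N × Vec N, 0 ≤ u p.1 * u p.2 := by
  have hint := (memHs_iff_integrable_gagliardoDensity.mp hu).2
  have hint_abs := (memHs_iff_integrable_gagliardoDensity.mp hu.abs).2
  have hdiff : ∫ p, (gagliardoDensity N s u u p -
      gagliardoDensity N s (fun x => |u x|) (fun x => |u x|) p) = 0 := by
    rw [integral_sub hint hint_abs, ← gagliardo_eq_integral_gagliardoDensity,
      ← gagliardo_eq_integral_gagliardoDensity, h, sub_self]
  filter_upwards [(integral_eq_zero_iff_of_nonneg
    (fun p => sub_nonneg.mpr (gagliardoDensity_abs_le p)) (hint.sub hint_abs)).mp hdiff] with p hp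
  rcases eq_or_ne p.1 p.2 with hdiag | hoff
  · rw [hdiag]
    exact mul_self_nonneg _
  · have hK : 0 < ‖p.1 - p.2‖ ^ ((N : ℝ) + 2 * s) :=
      Real.rpow_pos_of_pos (norm_pos_iff.mpr (sub_ne_zero.mpr hoff)) _
    rw [Pi.zero_apply, sub_eq_zero, gagliardoDensity_self, gagliardoDensity_self,
      div_left_inj' hK.ne'] at hp
    have habs : u p.1 * u p.2 = |u p.1| * |u p.2| := by
      nlinarith [sq_abs (u p.1), sq_abs (u p.2)]
    rw [habs]
    positivity

theorem ae_mul_eq_zero_of_integral_gagliardoDensity_eq_zero (hu : 0 ≤ᵐ[volume] u)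
    (hv : 0 ≤ᵐ[volume] v) (huv : ∀ᵐ x, u x * v x = 0)
    (hint : Integrable (gagliardoDensity N s u v) volume)
    (h : ∫ p, gagliardoDensity N s u v p = 0) :
    ∀ᵐ p : Vec N × Vec N, u p.1 * v p.2 = 0 := by
  have fst {P : Vec N → Prop} (h : ∀ᵐ x, P x) : ∀ᵐ p : Vec N × Vec N, P p.1 :=
    Measure.QuasiMeasurePreserving.ae Measure.quasiMeasurePreserving_fst h
  have snd {P : Vec N → Prop} (h : ∀ᵐ x, P x) : ∀ᵐ p : Vec N × Vec N, P p.2 :=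
    Measure.QuasiMeasurePreserving.ae Measure.quasiMeasurePreserving_snd h
  have hexpand : ∀ᵐ p : Vec N × Vec N, gagliardoDensity N s u v p =
      -((u p.1 * v p.2 + u p.2 * v p.1) / ‖p.1 - p.2‖ ^ ((N : ℝ) + 2 * s)) := by
    filter_upwards [fst huv, snd huv] with p h1 h2
    rw [gagliardoDensity, neg_div']
    congr 1
    linear_combination h1 + h2
  have hzero : ∀ᵐ p : Vec N × Vec N, gagliardoDensity N s u v p = 0 := by
    have hnonneg : 0 ≤ᵐ[volume] fun p => -gagliardoDensity N s u v p := by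
      filter_upwards [hexpand, fst hu, snd hu, fst hv, snd hv] with p hp h1 h2 h3 h4
      rw [hp, neg_neg]
      exact div_nonneg (add_nonneg (mul_nonneg h1 h4) (mul_nonneg h2 h3))
        (Real.rpow_nonneg (norm_nonneg _) _)
    filter_upwards [(integral_eq_zero_iff_of_nonneg_ae hnonneg hint.neg).mp
      (by rw [integral_neg, h, neg_zero])] with p hp
    exact neg_eq_zero.mp hp
  filter_upwards [hzero, hexpand, fst huv, fst hu, snd hu, fst hv, snd hv]
    with p hp hpexp h0 h1 h2 h3 h4
  -- the kernel `‖x - y‖ ^ (N + 2s)` vanishes on the diagonal, where `u v = 0` is used instead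
  rcases eq_or_ne p.1 p.2 with hdiag | hoff
  · rwa [← hdiag]
  · have hK : 0 < ‖p.1 - p.2‖ ^ ((N : ℝ) + 2 * s) :=
      Real.rpow_pos_of_pos (norm_pos_iff.mpr (sub_ne_zero.mpr hoff)) _
    rw [hp, eq_comm, neg_eq_zero, div_eq_zero_iff, or_iff_left hK.ne'] at hpexp
    nlinarith [mul_nonneg h1 h4, mul_nonneg h2 h3]

end Gagliardo

section RayleighQuotient

variable {N : ℕ} {s β : ℝ} {g u : Vec N → ℝ}

theorem Phi_nonneg (hβ : 0 ≤ β) (hg : ∀ x, 0 ≤ g x) (u : Vec N → ℝ) : 0 ≤ Phi N s β g u :=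
  add_nonneg gagliardo_nonneg
    (mul_nonneg hβ (integral_nonneg fun x => mul_nonneg (hg x) (sq_nonneg _)))

theorem lambda1_le_Phi (hβ : 0 ≤ β) (hg : ∀ x, 0 ≤ g x) (hu : u ∈ SigmaSet N s) :
    lambda1 N s β g ≤ Phi N s β g u :=
  csInf_le ⟨0, by rintro _ ⟨v, -, rfl⟩; exact Phi_nonneg hβ hg v⟩ ⟨u, hu, rfl⟩

theorem Phi_const_mul (c : ℝ) : Phi N s β g (fun x => c * u x) = c ^ 2 * Phi N s β g u := by
  have hpot : ∫ x, g x * (c * u x) ^ 2 = c ^ 2 * ∫ x, g x * u x ^ 2 := by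
    rw [← integral_const_mul]
    congr 1 with x
    ring
  rw [Phi, Phi, gagliardo_const_mul, hpot]
  ring

theorem lambda1_mul_le_Phi (hβ : 0 ≤ β) (hg : ∀ x, 0 ≤ g x) (hu : memHs N s u) :
    lambda1 N s β g * ∫ x, u x ^ 2 ≤ Phi N s β g u := by
  rcases (integral_nonneg (f := fun x => u x ^ 2) fun x => sq_nonneg (u x)).eq_or_lt with
    h0 | hpos
  · rw [← h0, mul_zero]
    exact Phi_nonneg hβ hg u
  set t := (√(∫ x, u x ^ 2))⁻¹
  have ht : t ^ 2 * ∫ x, u x ^ 2 = 1 := by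
    rw [inv_pow, Real.sq_sqrt hpos.le, inv_mul_cancel₀ hpos.ne']
  have hnormalized : (fun x => t * u x) ∈ SigmaSet N s :=
    ⟨hu.const_mul t, by simp_rw [mul_pow]; rw [integral_const_mul, ht]⟩
  have hle := lambda1_le_Phi hβ hg hnormalized
  rw [Phi_const_mul] at hle
  calc lambda1 N s β g * ∫ x, u x ^ 2 ≤ t ^ 2 * Phi N s β g u * ∫ x, u x ^ 2 :=
        mul_le_mul_of_nonneg_right hle hpos.le
    _ = Phi N s β g u := by rw [mul_right_comm, ht, one_mul]

theorem ae_nonneg_or_ae_nonpos_of_Phi_eq (hβ : 0 ≤ β) (hg : ∀ x, 0 ≤ g x) (hu : memHs N s u)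
    (h : Phi N s β g u = lambda1 N s β g * ∫ x, u x ^ 2) :
    0 ≤ᵐ[volume] u ∨ u ≤ᵐ[volume] 0 := by
  have hmin := lambda1_mul_le_Phi hβ hg hu.abs
  simp only [Phi, sq_abs] at hmin h
  have hgag : gagliardo N s (fun x => |u x|) = gagliardo N s u :=
    le_antisymm (gagliardo_abs_le hu) (by linarith)
  exact ae_nonneg_or_ae_nonpos_of_ae_mul_nonneg (ae_mul_nonneg_of_gagliardo_abs_eq hu hgag)

end RayleighQuotient

section WeakSolution

variable {N : ℕ} {s β lam : ℝ} {g u v w : Vec N → ℝ}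

/-- `u` solves `L_β u = lam u` weakly; unlike in `IsEigenpair`, `u = 0` is allowed, so the
solutions form a linear space. -/
def IsWeakSolution (N : ℕ) (s β : ℝ) (g : Vec N → ℝ) (lam : ℝ) (u : Vec N → ℝ) : Prop :=
  memHs N s u ∧ ∀ φ : Vec N → ℝ, memHs N s φ →
    (∫ p, gagliardoDensity N s u φ p) + β * ∫ x, g x * u x * φ x = lam * ∫ x, u x * φ x

theorem IsEigenpair.isWeakSolution (h : IsEigenpair N s β g lam u) :
    IsWeakSolution N s β g lam u :=
  ⟨h.1, h.2.2⟩

theorem IsWeakSolution.const_mul_add_const_mul {C : ℝ} (hgm : Measurable g)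
    (hgC : ∀ x, ‖g x‖ ≤ C) (hu : IsWeakSolution N s β g lam u)
    (hv : IsWeakSolution N s β g lam v) (a b : ℝ) :
    IsWeakSolution N s β g lam (fun x => a * u x + b * v x) := by
  refine ⟨(hu.1.const_mul a).add (hv.1.const_mul b), fun φ hφ => ?_⟩
  have hpot_int {f : Vec N → ℝ} (hf : memHs N s f) :
      Integrable (fun x => g x * f x * φ x) volume :=
    ((hf.1.integrable_mul hφ.1).bdd_mul hgm.aestronglyMeasurable (Eventually.of_forall hgC)).congr
      (Eventually.of_forall fun x => (mul_assoc _ _ _).symm)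
  have hcross : ∫ p, gagliardoDensity N s (fun x => a * u x + b * v x) φ p =
      a * (∫ p, gagliardoDensity N s u φ p) + b * ∫ p, gagliardoDensity N s v φ p := by
    rw [← integral_const_mul_add_const_mul (hu.1.integrable_gagliardoDensity hφ)
      (hv.1.integrable_gagliardoDensity hφ)]
    congr 1 with p
    simp only [gagliardoDensity]
    ring
  have hpot : ∫ x, g x * (a * u x + b * v x) * φ x =
      a * (∫ x, g x * u x * φ x) + b * ∫ x, g x * v x * φ x := by
    rw [← integral_const_mul_add_const_mul (hpot_int hu.1) (hpot_int hv.1)]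
    congr 1 with x
    ring
  have hmass : ∫ x, (a * u x + b * v x) * φ x = a * (∫ x, u x * φ x) + b * ∫ x, v x * φ x := by
    rw [← integral_const_mul_add_const_mul (f := fun x => u x * φ x) (g := fun x => v x * φ x)
      (hu.1.1.integrable_mul hφ.1) (hv.1.1.integrable_mul hφ.1)]
    congr 1 with x
    ring
  rw [hcross, hpot, hmass]
  linear_combination a * hu.2 φ hφ + b * hv.2 φ hφ

theorem IsWeakSolution.const_mul {C : ℝ} (hgm : Measurable g) (hgC : ∀ x, ‖g x‖ ≤ C)
    (hu : IsWeakSolution N s β g lam u) (c : ℝ) :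
    IsWeakSolution N s β g lam (fun x => c * u x) := by
  simpa using hu.const_mul_add_const_mul hgm hgC hu c 0

theorem IsWeakSolution.Phi_eq (hu : IsWeakSolution N s β g lam u) :
    Phi N s β g u = lam * ∫ x, u x ^ 2 := by
  have h := hu.2 u hu.1
  simp only [mul_assoc, ← sq] at h
  rwa [Phi, gagliardo_eq_integral_gagliardoDensity]

theorem IsWeakSolution.ae_eq_zero_or_ae_eq_zero_of_integral_mul_eq_zero
    (hu : IsWeakSolution N s β g lam u) (hw : memHs N s w) (hu0 : 0 ≤ᵐ[volume] u)
    (hw0 : 0 ≤ᵐ[volume] w) (h : ∫ x, u x * w x = 0) : u =ᵐ[volume] 0 ∨ w =ᵐ[volume] 0 := by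
  have huw_nonneg : ∀ᵐ x, 0 ≤ u x * w x := by
    filter_upwards [hu0, hw0] with x h1 h2
    exact mul_nonneg h1 h2
  have huw : ∀ᵐ x, u x * w x = 0 :=
    (integral_eq_zero_iff_of_nonneg_ae huw_nonneg (hu.1.1.integrable_mul hw.1)).mp h
  have hpot : ∫ x, g x * u x * w x = 0 :=
    integral_eq_zero_of_ae (by filter_upwards [huw] with x hx; simp [mul_assoc, hx])
  have hcross : ∫ p, gagliardoDensity N s u w p = 0 := by
    simpa [h, hpot] using hu.2 w hw
  exact ae_eq_zero_or_ae_eq_zero_of_ae_mul_eq_zero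
    (ae_mul_eq_zero_of_integral_gagliardoDensity_eq_zero hu0 hw0 huw
      (hu.1.integrable_gagliardoDensity hw) hcross)

theorem IsWeakSolution.ae_eq_zero_of_integral_mul_eq_zero {C : ℝ} (hβ : 0 ≤ β)
    (hgm : Measurable g) (hgC : ∀ x, ‖g x‖ ≤ C) (hg0 : ∀ x, 0 ≤ g x)
    (hu : IsWeakSolution N s β g (lambda1 N s β g) u)
    (hu0 : ¬ u =ᵐ[volume] 0) (hw : IsWeakSolution N s β g (lambda1 N s β g) w)
    (h : ∫ x, u x * w x = 0) : w =ᵐ[volume] 0 := by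
  obtain ⟨a, ha, hau⟩ := exists_ne_zero_ae_nonneg_const_mul
    (ae_nonneg_or_ae_nonpos_of_Phi_eq hβ hg0 hu.1 hu.Phi_eq)
  obtain ⟨b, hb, hbw⟩ := exists_ne_zero_ae_nonneg_const_mul
    (ae_nonneg_or_ae_nonpos_of_Phi_eq hβ hg0 hw.1 hw.Phi_eq)
  have horth : ∫ x, a * u x * (b * w x) = 0 := by
    simp_rw [mul_mul_mul_comm]
    rw [integral_const_mul, h, mul_zero]
  rcases (hu.const_mul hgm hgC a).ae_eq_zero_or_ae_eq_zero_of_integral_mul_eq_zero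
    (hw.1.const_mul b) hau hbw horth with h0 | h0
  · refine absurd ?_ hu0
    filter_upwards [h0] with x hx
    exact (mul_eq_zero.mp hx).resolve_left ha
  · filter_upwards [h0] with x hx
    exact (mul_eq_zero.mp hx).resolve_left hb

end WeakSolution

theorem lambda1_simple_general (N : ℕ) (s β : ℝ) (hβ : 0 < β) (g : Vec N → ℝ) (hg : g1cond N g)
    (u v : Vec N → ℝ)
    (hu : IsEigenpair N s β g (lambda1 N s β g) u)
    (hv : IsEigenpair N s β g (lambda1 N s β g) v) :
    ∃ χ : ℝ, v =ᵐ[(volume : Measure (Vec N))] fun x => χ * u x := by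
  obtain ⟨hgm, hg01, -, -⟩ := hg
  have hg1 x : ‖g x‖ ≤ 1 := by rw [Real.norm_of_nonneg (hg01 x).1]; exact (hg01 x).2
  set χ := (∫ x, u x * v x) / ∫ x, u x ^ 2
  have hw := hv.isWeakSolution.const_mul_add_const_mul hgm hg1 hu.isWeakSolution 1 (-χ)
  have horth : ∫ x, u x * (1 * v x + -χ * u x) = 0 := by
    have hmass := (integral_sq_pos hu.1.1 hu.2.1).ne'
    calc ∫ x, u x * (1 * v x + -χ * u x) = 1 * (∫ x, u x * v x) + -χ * ∫ x, u x ^ 2 := by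
          rw [← integral_const_mul_add_const_mul (f := fun x => u x * v x)
            (g := fun x => u x ^ 2) (hu.1.1.integrable_mul hv.1.1) hu.1.1.integrable_sq]
          congr 1 with x
          ring
      _ = 0 := by
          rw [neg_mul, div_mul_cancel₀ _ hmass]
          ring
  refine ⟨χ, ?_⟩
  filter_upwards [hu.isWeakSolution.ae_eq_zero_of_integral_mul_eq_zero hβ.le hgm hg1
    (fun x => (hg01 x).1) hu.2.1 hw horth] with x hx
  simp only [Pi.zero_apply] at hx
  linarith

/-- if `λ₁` is an eigenvalue, it is simple: any two associated
eigenfunctions are proportional (a.e.). -/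
theorem lambda1_simple (N : ℕ) (s β : ℝ) (hs : s ∈ Set.Ioo (0 : ℝ) 1)
    (hN : 2 * s < N) (hβ : 0 < β) (g : Vec N → ℝ) (hg : g1cond N g)
    (u v : Vec N → ℝ)
    (hu : IsEigenpair N s β g (lambda1 N s β g) u)
    (hv : IsEigenpair N s β g (lambda1 N s β g) v) :
    ∃ χ : ℝ, v =ᵐ[(volume : Measure (Vec N))] fun x => χ * u x :=
  lambda1_simple_general N s β hβ g hg u v hu hv
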